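/- For every monic polynomial p(z) = z^n + a_{n-1} z^{n-1} + ... + a_1 z + a_0 with coefficients a_i in a unital complex Banach algebra A (n ≥ 1), there exists a complex number z such that p(z) is not invertible in A. -/

import Mathlib

/-!
If `p(z)` were invertible for every `z`, then `z ↦ p(z)⁻¹` would be entire, since inversion is
holomorphic on the units of a Banach algebra. Writing `p(z) = zⁿ (1 + r(z))` with `r(z) → 0`
shows `p(z)⁻¹ → 0` at infinity, so by Liouville `p(z)⁻¹ = 0`, which no inverse can be.
-/

open Filter Bornology Topology Finset

theorem Ring.inverse_smul {𝕜 A : Type*} [Field 𝕜] [Ring A] [Algebra 𝕜 A] {c : 𝕜} (hc : c ≠ 0)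
    (x : A) : Ring.inverse (c • x) = c⁻¹ • Ring.inverse x := by
  lift c to 𝕜ˣ using hc.isUnit
  by_cases hx : IsUnit x
  · lift x to Aˣ using hx
    rw [← Units.smul_def, ← Units.val_smul, Ring.inverse_unit, Ring.inverse_unit]
    simp [Units.smul_def]
  · have hcx : ¬IsUnit (c • x) := by rwa [isUnit_smul_iff]
    rw [← Units.smul_def, Ring.inverse_non_unit _ hx, Ring.inverse_non_unit _ hcx, smul_zero]

theorem tendsto_inv_pow_mul_pow_cobounded {𝕜 : Type*} [NormedField 𝕜] {i n : ℕ} (hi : i < n) :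
    Tendsto (fun z : 𝕜 => (z ^ n)⁻¹ * z ^ i) (cobounded 𝕜) (𝓝 0) := by
  obtain ⟨k, rfl⟩ := Nat.exists_eq_add_of_lt hi
  have hlim : Tendsto (fun z : 𝕜 => z⁻¹ ^ (k + 1)) (cobounded 𝕜) (𝓝 0) := by
    simpa using (tendsto_inv₀_cobounded (α := 𝕜)).pow (k + 1)
  refine hlim.congr' ?_
  filter_upwards [isBounded_singleton (x := (0 : 𝕜))] with z hz
  have hz : z ≠ 0 := hz
  rw [add_assoc, pow_add z i, mul_inv, mul_comm, ← mul_assoc, mul_inv_cancel₀ (pow_ne_zero i hz),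
    one_mul, inv_pow]

theorem tendsto_inv_pow_smul_sum_pow_smul_cobounded {𝕜 E : Type*} [NormedField 𝕜]
    [AddCommMonoid E] [Module 𝕜 E] [TopologicalSpace E] [ContinuousAdd E] [ContinuousSMul 𝕜 E]
    (n : ℕ) (a : ℕ → E) :
    Tendsto (fun z : 𝕜 => (z ^ n)⁻¹ • ∑ i ∈ range n, z ^ i • a i) (cobounded 𝕜) (𝓝 0) := by
  simp_rw [smul_sum, smul_smul]
  simpa using tendsto_finsetSum (range n) fun i hi =>
    (tendsto_inv_pow_mul_pow_cobounded (𝕜 := 𝕜) (mem_range.mp hi)).smul_const (a i)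

theorem tendsto_inverse_monic_cobounded {𝕜 A : Type*} [NormedField 𝕜] [NormedRing A]
    [NormedAlgebra 𝕜 A] [CompleteSpace A] {n : ℕ} (hn : 0 < n) (a : ℕ → A) :
    Tendsto (fun z : 𝕜 => Ring.inverse (z ^ n • (1 : A) + ∑ i ∈ range n, z ^ i • a i))
      (cobounded 𝕜) (𝓝 0) := by
  set s : 𝕜 → A := fun z => ∑ i ∈ range n, z ^ i • a i
  have hscalar : Tendsto (fun z : 𝕜 => (z ^ n)⁻¹) (cobounded 𝕜) (𝓝 0) := by
    simpa using tendsto_inv_pow_mul_pow_cobounded (𝕜 := 𝕜) hn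
  have hunit : Tendsto (fun z : 𝕜 => Ring.inverse (1 + (z ^ n)⁻¹ • s z)) (cobounded 𝕜) (𝓝 1) := by
    simpa [Function.comp_def] using (NormedRing.inverse_continuousAt (1 : Aˣ)).tendsto.comp
      (by simpa using tendsto_const_nhds.add (tendsto_inv_pow_smul_sum_pow_smul_cobounded n a))
  have hlim : Tendsto (fun z : 𝕜 => (z ^ n)⁻¹ • Ring.inverse (1 + (z ^ n)⁻¹ • s z)) (cobounded 𝕜)
      (𝓝 0) := by
    simpa using hscalar.smul hunit
  refine hlim.congr' ?_
  filter_upwards [isBounded_singleton (x := (0 : 𝕜))] with z hz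
  have hzn : z ^ n ≠ 0 := pow_ne_zero n hz
  rw [← Ring.inverse_smul hzn, smul_add, smul_smul, mul_inv_cancel₀ hzn, one_smul]

theorem exists_not_isUnit_of_tendsto_inverse_cobounded {A : Type*} [NormedRing A]
    [NormedAlgebra ℂ A] [CompleteSpace A] [Nontrivial A] {p : ℂ → A} (hp : Differentiable ℂ p)
    (hinv : Tendsto (fun z => Ring.inverse (p z)) (cobounded ℂ) (𝓝 0)) : ∃ z, ¬IsUnit (p z) := by
  by_contra! hunit
  have hdiff : Differentiable ℂ fun z => Ring.inverse (p z) := fun z =>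
    (differentiableAt_inverse (hunit z)).comp z (hp z)
  have hzero : Ring.inverse (p 0) = 0 :=
    hdiff.apply_eq_of_tendsto_cocompact 0 (Metric.cobounded_eq_cocompact (α := ℂ) ▸ hinv)
  simpa [hzero] using Ring.inverse_mul_cancel _ (hunit 0)

/-- For every monic polynomial `p(z) = z^n + a_{n-1} z^{n-1} + ⋯ + a_0` (n ≥ 1) with
coefficients in a unital complex Banach algebra `A`, there exists `z : ℂ` such that
`p(z)` is not invertible in `A`. -/
theorem stmt_0 {A : Type*} [NormedRing A] [NormedAlgebra ℂ A] [CompleteSpace A]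
    [Nontrivial A] (n : ℕ) (hn : 1 ≤ n) (a : ℕ → A) :
    ∃ z : ℂ, ¬ IsUnit ((z ^ n) • (1 : A) + ∑ i ∈ Finset.range n, (z ^ i) • a i) := by
  refine exists_not_isUnit_of_tendsto_inverse_cobounded ?_ (tendsto_inverse_monic_cobounded hn a)
  exact ((differentiable_pow n).smul_const 1).add
    (Differentiable.fun_sum fun i _ => (differentiable_pow i).smul_const (a i))
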